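/- arXiv:math/9903199 — 4 statements merged into one kernel-verified Lean document; each statement's English description precedes it below -/
import Mathlib

section
/- For every natural number p ≥ 1 and every β with 0 ≤ β < 1, the sum Σ_{k=1}^∞ k^{2p} β^k is strictly less than (4p)^{2p} / (1-β)^{2p+1}. -/
/-- Estimate (3.5): for `p ≥ 1` and `0 ≤ β < 1`,
`Σ_{k≥1} k^(2p) β^k < (4p)^(2p) / (1-β)^(2p+1)`. -/
theorem tsum_pow_lt (p : ℕ) (hp : 1 ≤ p) (β : ℝ) (hβ0 : 0 ≤ β) (hβ1 : β < 1) :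
    ∑' k : ℕ, ((k + 1 : ℕ) : ℝ) ^ (2 * p) * β ^ (k + 1) <
      (4 * (p : ℝ)) ^ (2 * p) / (1 - β) ^ (2 * p + 1) := by
  set n := 2 * p with hn
  have hβ : ‖β‖ < 1 := by rwa [Real.norm_eq_abs, abs_of_nonneg hβ0]
  have h1β : 0 < 1 - β := by linarith
  -- the comparison series
  have hg : HasSum (fun k : ℕ => (β * (Nat.factorial n : ℝ)) * (((k + n).choose n : ℝ) * β ^ k))
      ((β * (Nat.factorial n : ℝ)) * (1 / (1 - β) ^ (n + 1))) :=
    (hasSum_choose_mul_geometric_of_norm_lt_one n hβ).mul_left _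
  -- termwise bound
  have hterm : ∀ k : ℕ, ((k + 1 : ℕ) : ℝ) ^ n * β ^ (k + 1) ≤
      (β * (Nat.factorial n : ℝ)) * (((k + n).choose n : ℝ) * β ^ k) := by
    intro k
    have hnat : (k + 1) ^ n ≤ Nat.factorial n * (k + n).choose n := by
      calc (k + 1) ^ n ≤ (k + 1).ascFactorial n := Nat.pow_succ_le_ascFactorial _ _
        _ = Nat.factorial n * (k + n).choose n := Nat.ascFactorial_eq_factorial_mul_choose k n
    have hR : ((k + 1 : ℕ) : ℝ) ^ n ≤ (Nat.factorial n : ℝ) * ((k + n).choose n : ℝ) := by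
      exact_mod_cast hnat
    calc ((k + 1 : ℕ) : ℝ) ^ n * β ^ (k + 1)
        ≤ ((Nat.factorial n : ℝ) * ((k + n).choose n : ℝ)) * β ^ (k + 1) := by
          apply mul_le_mul_of_nonneg_right hR (pow_nonneg hβ0 _)
      _ = (β * (Nat.factorial n : ℝ)) * (((k + n).choose n : ℝ) * β ^ k) := by ring
  have hfnn : ∀ k : ℕ, 0 ≤ ((k + 1 : ℕ) : ℝ) ^ n * β ^ (k + 1) := fun k =>
    mul_nonneg (pow_nonneg (Nat.cast_nonneg _) _) (pow_nonneg hβ0 _)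
  have hf : Summable (fun k : ℕ => ((k + 1 : ℕ) : ℝ) ^ n * β ^ (k + 1)) :=
    Summable.of_nonneg_of_le hfnn hterm hg.summable
  have hle : ∑' k : ℕ, ((k + 1 : ℕ) : ℝ) ^ n * β ^ (k + 1) ≤
      (β * (Nat.factorial n : ℝ)) * (1 / (1 - β) ^ (n + 1)) := by
    rw [← hg.tsum_eq]
    exact Summable.tsum_le_tsum hterm hf hg.summable
  have hfac : (Nat.factorial n : ℝ) < (4 * (p : ℝ)) ^ n := by
    have h1 : (Nat.factorial n : ℝ) ≤ (n : ℝ) ^ n := by exact_mod_cast Nat.factorial_le_pow n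
    have h2 : ((n : ℝ)) ^ n < (4 * (p : ℝ)) ^ n := by
      apply pow_lt_pow_left₀ _ (Nat.cast_nonneg n) (by positivity)
      have : (n : ℝ) = 2 * (p : ℝ) := by push_cast [hn]; ring
      rw [this]
      have hp' : (1 : ℝ) ≤ (p : ℝ) := by exact_mod_cast hp
      linarith
    linarith
  have hpow : 0 < (1 - β) ^ (n + 1) := pow_pos h1β _
  calc ∑' k : ℕ, ((k + 1 : ℕ) : ℝ) ^ n * β ^ (k + 1)
      ≤ (β * (Nat.factorial n : ℝ)) * (1 / (1 - β) ^ (n + 1)) := hle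
    _ ≤ (Nat.factorial n : ℝ) * (1 / (1 - β) ^ (n + 1)) := by
        apply mul_le_mul_of_nonneg_right _ (by positivity)
        nlinarith [(Nat.cast_pos (α := ℝ)).mpr (Nat.factorial_pos n)]
    _ < (4 * (p : ℝ)) ^ n * (1 / (1 - β) ^ (n + 1)) := by
        apply mul_lt_mul_of_pos_right hfac (by positivity)
    _ = (4 * (p : ℝ)) ^ n / (1 - β) ^ (n + 1) := by ring
end

section
/- Let (Y, μ) be a compact metric measure space with μ a finite positive Borel measure, and let f : Y → ℂ be a continuous function, not identically zero, such that for every measurable ω ⊂ Y with μ(ω) > 0, max_Y |f| ≤ (C μ(Y)/μ(ω))^α · sup_ω |f|, where C ≥ 1 and α > 0 are constants. Then (1/μ(Y)) ∫_Y |log(|f|/max_Y |f|)| dμ ≤ α C' for a constant C' depending only on C. -/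
open MeasureTheory Set

/-- A Remez-type inequality implies a uniform bound on the mean of
`|log(|f|/‖f‖_Y)|` (inequality (3.11)): there is `C' = C'(C)` such that for every
compact metric measure space `(Y, μ)`, every continuous `f ≠ 0` satisfying
`max_Y |f| ≤ (C μ(Y)/μ(ω))^α sup_ω |f|` for all measurable `ω` of positive
measure, one has `(1/μ(Y)) ∫_Y |log(|f|/max_Y |f|)| dμ ≤ α C'`. -/
theorem remez_implies_logBMO_bound :
    ∃ C' : ℝ → ℝ,
      ∀ (Y : Type) [MetricSpace Y] [CompactSpace Y] [MeasurableSpace Y] [BorelSpace Y]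
        (μ : Measure Y) [IsFiniteMeasure μ], 0 < μ Set.univ →
        ∀ (f : Y → ℂ) (C α : ℝ), 1 ≤ C → 0 < α → Continuous f → (∃ y, f y ≠ 0) →
        (∀ ω : Set Y, MeasurableSet ω → 0 < μ ω →
          sSup ((fun y => ‖f y‖) '' Set.univ) ≤
            (C * (μ Set.univ).toReal / (μ ω).toReal) ^ α *
              sSup ((fun y => ‖f y‖) '' ω)) →
        Integrable (fun y =>
            |Real.log (‖f y‖ / sSup ((fun y => ‖f y‖) '' Set.univ))|) μ ∧
          (1 / (μ Set.univ).toReal) *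
              ∫ y, |Real.log (‖f y‖ /
                sSup ((fun y => ‖f y‖) '' Set.univ))| ∂μ ≤ α * C' C := by
  refine ⟨fun C => Real.log C + 1, ?_⟩
  intro Y _ _ _ _ μ _ hμY f C α hC hα hf hne hRemez
  set F : Y → ℝ := fun y => ‖f y‖ with hFdef
  have hFc : Continuous F := continuous_norm.comp hf
  set M : ℝ := sSup (F '' univ) with hMdef
  have hCpos : (0:ℝ) < C := lt_of_lt_of_le one_pos hC
  have hbdd : BddAbove (F '' univ) := (isCompact_univ.image hFc).bddAbove
  have hle : ∀ y, F y ≤ M := fun y => le_csSup hbdd ⟨y, trivial, rfl⟩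
  obtain ⟨y₀, hy₀⟩ := hne
  have hMpos : 0 < M := lt_of_lt_of_le (by simpa [hFdef] using norm_pos_iff.mpr hy₀) (hle y₀)
  have hV : 0 < (μ univ).toReal := ENNReal.toReal_pos hμY.ne' (measure_ne_top μ univ)
  set V : ℝ := (μ univ).toReal with hVdef
  set g : Y → ℝ := fun y => |Real.log (F y / M)| with hgdef
  have hgmeas : Measurable g := (Real.measurable_log.comp (hFc.measurable.div_const M)).abs
  have hgnn : ∀ y, 0 ≤ g y := fun y => abs_nonneg _
  -- distribution estimate
  have key : ∀ t : ℝ, 0 < t →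
      μ {y | t < g y} ≤ ENNReal.ofReal (C * Real.exp (-t / α)) * μ univ := by
    intro t ht
    set ω : Set Y := {y | F y ≤ Real.exp (-t) * M} with hωdef
    have hωm : MeasurableSet ω := measurableSet_le hFc.measurable measurable_const
    have hsub : {y | t < g y} ⊆ ω := by
      intro y hy
      simp only [mem_setOf_eq] at hy ⊢
      show F y ≤ Real.exp (-t) * M
      rcases eq_or_lt_of_le (norm_nonneg (f y)) with h0 | h0
      · have h00 : F y = 0 := h0.symm
        rw [h00]; positivity
      · have hFy : 0 < F y := h0
        have hdiv : 0 < F y / M := div_pos hFy hMpos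
        have hdle : F y / M ≤ 1 := (div_le_one hMpos).2 (hle y)
        have hlognp : Real.log (F y / M) ≤ 0 := Real.log_nonpos hdiv.le hdle
        have hy' : t < |Real.log (F y / M)| := hy
        have hlt' : Real.log (F y / M) < -t := by
          rw [abs_of_nonpos hlognp] at hy'
          linarith
        have hlt : F y / M < Real.exp (-t) := by
          calc F y / M = Real.exp (Real.log (F y / M)) := (Real.exp_log hdiv).symm
            _ < Real.exp (-t) := Real.exp_lt_exp.2 hlt'
        have := (div_lt_iff₀ hMpos).1 hlt
        linarith
    refine le_trans (measure_mono hsub) ?_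
    rcases eq_or_lt_of_le (zero_le : (0:ENNReal) ≤ μ ω) with hz | hpos
    · rw [← hz]; exact zero_le
    have hm : 0 < (μ ω).toReal := ENNReal.toReal_pos hpos.ne' (measure_ne_top μ ω)
    set m : ℝ := (μ ω).toReal with hmdef
    have hωne : ω.Nonempty := nonempty_of_measure_ne_zero hpos.ne'
    have hS : sSup (F '' ω) ≤ Real.exp (-t) * M := by
      apply csSup_le (hωne.image F)
      rintro b ⟨y, hy, rfl⟩
      exact hy
    have hR := hRemez ω hωm hpos
    have hbase : 0 < C * V / m := by positivity
    have h1 : M ≤ (C * V / m) ^ α * (Real.exp (-t) * M) := by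
      refine le_trans hR ?_
      exact mul_le_mul_of_nonneg_left hS (Real.rpow_nonneg hbase.le α)
    have h2 : Real.exp t ≤ (C * V / m) ^ α := by
      have h3 : 1 ≤ (C * V / m) ^ α * Real.exp (-t) := by
        have h1b := h1
        rw [← mul_assoc] at h1b
        exact (le_mul_iff_one_le_left hMpos).1 h1b
      have := mul_le_mul_of_nonneg_right h3 (Real.exp_pos t).le
      rw [one_mul, mul_assoc, ← Real.exp_add, neg_add_cancel, Real.exp_zero, mul_one] at this
      exact this
    have h4 : t ≤ α * Real.log (C * V / m) := by
      have := Real.log_le_log (Real.exp_pos t) h2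
      rwa [Real.log_exp, Real.log_rpow hbase] at this
    have h5 : Real.exp (t / α) ≤ C * V / m := by
      have hta : t / α ≤ Real.log (C * V / m) := by
        rw [div_le_iff₀ hα]
        linarith [h4]
      calc Real.exp (t / α) ≤ Real.exp (Real.log (C * V / m)) := Real.exp_le_exp.2 hta
        _ = C * V / m := Real.exp_log hbase
    have h6 : m ≤ C * Real.exp (-t / α) * V := by
      have hepos : 0 < Real.exp (t / α) := Real.exp_pos _
      have h5a : Real.exp (t / α) * m ≤ C * V := (le_div_iff₀ hm).1 h5
      have h5b : m ≤ C * V / Real.exp (t / α) :=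
        (le_div_iff₀ hepos).2 (by rw [mul_comm]; exact h5a)
      calc m ≤ C * V / Real.exp (t / α) := h5b
        _ = C * Real.exp (-(t / α)) * V := by rw [Real.exp_neg]; ring
        _ = C * Real.exp (-t / α) * V := by rw [neg_div]
    have : μ ω = ENNReal.ofReal m := (ENNReal.ofReal_toReal (measure_ne_top μ ω)).symm
    rw [this]
    calc ENNReal.ofReal m ≤ ENNReal.ofReal (C * Real.exp (-t / α) * V) :=
          ENNReal.ofReal_le_ofReal h6
      _ = ENNReal.ofReal (C * Real.exp (-t / α)) * ENNReal.ofReal V :=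
          ENNReal.ofReal_mul (by positivity)
      _ = ENNReal.ofReal (C * Real.exp (-t / α)) * μ univ := by
          rw [hVdef, ENNReal.ofReal_toReal (measure_ne_top μ univ)]
  -- layer cake
  have hlayer : ∫⁻ y, ENNReal.ofReal (g y) ∂μ = ∫⁻ t in Ioi 0, μ {y | t < g y} :=
    lintegral_eq_lintegral_meas_lt μ (ae_of_all μ hgnn) hgmeas.aemeasurable
  set t₀ : ℝ := α * Real.log C with ht₀def
  have ht₀ : 0 ≤ t₀ := mul_nonneg hα.le (Real.log_nonneg hC)
  have hIntExp : IntegrableOn (fun t : ℝ => C * Real.exp (-t / α)) (Ioi t₀) := by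
    have h := (exp_neg_integrableOn_Ioi t₀ (inv_pos.2 hα)).const_mul C
    have e1 : (fun t : ℝ => C * Real.exp (-t / α))
        = fun t : ℝ => C * Real.exp (-α⁻¹ * t) := by
      funext t; rw [neg_div, div_eq_mul_inv, mul_comm t α⁻¹, ← neg_mul]
    rw [e1]; exact h
  have hExpVal : (∫ t in Ioi t₀, C * Real.exp (-t / α)) = α := by
    have h := integral_comp_mul_right_Ioi (fun x => C * Real.exp (-x)) t₀ (inv_pos.2 hα)
    simp only [smul_eq_mul] at h
    have e1 : (fun t : ℝ => C * Real.exp (-t / α))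
        = fun t : ℝ => C * Real.exp (-(t * α⁻¹)) := by
      funext t; rw [neg_div, div_eq_mul_inv]
    rw [e1, h, integral_const_mul, integral_exp_neg_Ioi]
    have e2 : t₀ * α⁻¹ = Real.log C := by
      rw [ht₀def, mul_comm α, mul_assoc, mul_inv_cancel₀ hα.ne', mul_one]
    rw [e2, Real.exp_neg, Real.exp_log hCpos, inv_inv]
    field_simp
  have hTail : (∫⁻ t in Ioi t₀, ENNReal.ofReal (C * Real.exp (-t / α)))
      = ENNReal.ofReal α := by
    rw [← ofReal_integral_eq_lintegral_ofReal hIntExp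
      (ae_of_all _ fun t => by positivity), hExpVal]
  have hbmeas : Measurable fun t : ℝ => ENNReal.ofReal (C * Real.exp (-t / α)) :=
    (continuous_const.mul (Real.continuous_exp.comp
      ((continuous_neg).div_const α))).measurable.ennreal_ofReal
  have hbound : (∫⁻ t in Ioi 0, μ {y | t < g y})
      ≤ μ univ * ENNReal.ofReal (α * (Real.log C + 1)) := by
    have hsplit : (Ioi (0:ℝ)) = Ioc 0 t₀ ∪ Ioi t₀ := (Ioc_union_Ioi_eq_Ioi ht₀).symm
    rw [hsplit, lintegral_union measurableSet_Ioi Ioc_disjoint_Ioi_same]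
    have hb1 : (∫⁻ t in Ioc (0:ℝ) t₀, μ {y | t < g y}) ≤ μ univ * ENNReal.ofReal t₀ := by
      calc (∫⁻ t in Ioc (0:ℝ) t₀, μ {y | t < g y})
          ≤ ∫⁻ _ in Ioc (0:ℝ) t₀, μ univ :=
            lintegral_mono fun t => measure_mono (subset_univ _)
        _ = μ univ * volume (Ioc (0:ℝ) t₀) := by rw [setLIntegral_const]
        _ = μ univ * ENNReal.ofReal t₀ := by rw [Real.volume_Ioc, sub_zero]
    have hb2 : (∫⁻ t in Ioi t₀, μ {y | t < g y}) ≤ μ univ * ENNReal.ofReal α := by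
      calc (∫⁻ t in Ioi t₀, μ {y | t < g y})
          ≤ ∫⁻ t in Ioi t₀, ENNReal.ofReal (C * Real.exp (-t / α)) * μ univ := by
            refine setLIntegral_mono (hbmeas.mul_const _) fun t ht => ?_
            exact key t (lt_of_le_of_lt ht₀ ht)
        _ = (∫⁻ t in Ioi t₀, ENNReal.ofReal (C * Real.exp (-t / α))) * μ univ :=
            lintegral_mul_const _ hbmeas
        _ = ENNReal.ofReal α * μ univ := by rw [hTail]
        _ = μ univ * ENNReal.ofReal α := mul_comm _ _
    calc _ ≤ μ univ * ENNReal.ofReal t₀ + μ univ * ENNReal.ofReal α := add_le_add hb1 hb2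
      _ = μ univ * (ENNReal.ofReal t₀ + ENNReal.ofReal α) := (mul_add _ _ _).symm
      _ = μ univ * ENNReal.ofReal (t₀ + α) := by rw [ENNReal.ofReal_add ht₀ hα.le]
      _ = μ univ * ENNReal.ofReal (α * (Real.log C + 1)) := by
          rw [ht₀def]; congr 1; ring
  have hfin : (∫⁻ y, ENNReal.ofReal (g y) ∂μ) < ⊤ := by
    rw [hlayer]
    exact lt_of_le_of_lt hbound
      (ENNReal.mul_lt_top (measure_lt_top μ univ) ENNReal.ofReal_lt_top)
  have hint : Integrable g μ := by
    refine ⟨hgmeas.aestronglyMeasurable, ?_⟩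
    rw [hasFiniteIntegral_iff_ofReal (ae_of_all _ hgnn)]
    exact hfin
  refine ⟨hint, ?_⟩
  have hInteq : ∫ y, g y ∂μ = (∫⁻ y, ENNReal.ofReal (g y) ∂μ).toReal :=
    integral_eq_lintegral_of_nonneg_ae (ae_of_all _ hgnn) hgmeas.aestronglyMeasurable
  have hK : (0:ℝ) ≤ α * (Real.log C + 1) := by
    have := Real.log_nonneg hC; positivity
  have hle2 : ∫ y, g y ∂μ ≤ V * (α * (Real.log C + 1)) := by
    rw [hInteq]
    have hmono := ENNReal.toReal_mono
      (by finiteness : μ univ * ENNReal.ofReal (α * (Real.log C + 1)) ≠ ⊤)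
      (hlayer ▸ hbound)
    rwa [ENNReal.toReal_mul, ENNReal.toReal_ofReal hK] at hmono
  calc (1 / V) * ∫ y, g y ∂μ ≤ (1 / V) * (V * (α * (Real.log C + 1))) :=
        mul_le_mul_of_nonneg_left hle2 (by positivity)
    _ = α * (Real.log C + 1) := by field_simp
end

section
/- Let I ⊂ ℝ be an interval, ω ⊂ I measurable with positive measure, and p a real polynomial of one variable of degree at most k. Then sup_I |p| ≤ (4|I|/|ω|)^k · sup_ω |p|. -/
section ChebPart
open Polynomial Polynomial.Chebyshev Real Finset

lemma cheb_natDegree_le (n : ℕ) : (T ℝ n).natDegree ≤ n ∧ (T ℝ (n+1)).natDegree ≤ n+1 := by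
  induction n with
  | zero => constructor
            · simp [T_zero]
            · simpa using natDegree_X_le
  | succ n ih =>
    obtain ⟨h0, h1⟩ := ih
    refine ⟨h1, ?_⟩
    have hT : T ℝ ((n:ℤ)+1+1) = 2 * X * T ℝ ((n:ℤ)+1) - T ℝ (n:ℤ) := by
      have := T_add_two ℝ (n : ℤ)
      exact this
    push_cast; rw [hT]
    have hx : (2*X : ℝ[X]).natDegree ≤ 1 := le_trans natDegree_mul_le (by simp)
    have hd : (2*X*T ℝ ((n:ℤ)+1)).natDegree ≤ n+2 := by
      have := natDegree_mul_le (p := (2*X : ℝ[X])) (q := T ℝ ((n:ℤ)+1))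
      omega
    have := natDegree_sub_le (2*X*T ℝ ((n:ℤ)+1)) (T ℝ (n:ℤ))
    omega

lemma cheb_coeff (n : ℕ) : (T ℝ (n+1)).coeff (n+1) = 2^n := by
  induction n with
  | zero => simp [T_one]
  | succ n ih =>
    have hT : T ℝ ((n:ℤ)+1+1) = 2 * X * T ℝ ((n:ℤ)+1) - T ℝ (n:ℤ) := by
      have := T_add_two ℝ (n : ℤ)
      exact this
    push_cast; rw [hT, coeff_sub]
    have h2 : (2*X*T ℝ ((n:ℤ)+1)) = C 2 * (X * T ℝ ((n:ℤ)+1)) := by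
      rw [← mul_assoc, map_ofNat]
    rw [h2, coeff_C_mul, coeff_X_mul, ih,
        coeff_eq_zero_of_natDegree_lt (lt_of_le_of_lt (cheb_natDegree_le n).1 (by omega))]
    ring

noncomputable def chebNode (n j : ℕ) : ℝ := Real.cos ((2*j+1)*π/(2*n))

lemma chebAngle_mem {n j : ℕ} (hj : j < n) :
    (2*(j:ℝ)+1)*π/(2*n) ∈ Set.Ioo 0 π := by
  have hπ := Real.pi_pos
  have hn : (0:ℝ) < n := by exact_mod_cast Nat.lt_of_le_of_lt (Nat.zero_le j) hj
  constructor
  · positivity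
  · rw [div_lt_iff₀ (by positivity)]
    have : (j:ℝ) + 1 ≤ n := by exact_mod_cast hj
    nlinarith

lemma chebNode_injOn (n : ℕ) : Set.InjOn (chebNode n) (range n) := by
  intro i hi j hj hij
  simp only [coe_range, Set.mem_Iio] at hi hj
  have h1 := chebAngle_mem (n := n) (j := i) hi
  have h2 := chebAngle_mem (n := n) (j := j) hj
  have heq := Real.injOn_cos (Set.mem_Icc_of_Ioo h1) (Set.mem_Icc_of_Ioo h2) hij
  have hπ := Real.pi_pos
  have hn : (0:ℝ) < n := by exact_mod_cast Nat.lt_of_le_of_lt (Nat.zero_le j) hj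
  have : (i:ℝ) = j := by
    have hne : π/(2*(n:ℝ)) ≠ 0 := by positivity
    field_simp at heq
    linarith
  exact_mod_cast this

lemma cheb_root {n j : ℕ} (hj : j < n) : (T ℝ n).eval (chebNode n j) = 0 := by
  have hn : (0:ℝ) < n := by exact_mod_cast Nat.lt_of_le_of_lt (Nat.zero_le j) hj
  rw [chebNode, T_real_cos]
  have : ((n:ℤ):ℝ) * ((2*j+1)*π/(2*n)) = j*π + π/2 := by
    push_cast; field_simp
  rw [this, Real.cos_add_pi_div_two, Real.sin_nat_mul_pi, neg_zero]

lemma cheb_natDegree_le' (n : ℕ) : (T ℝ n).natDegree ≤ n := by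
  rcases n with _ | n
  · simp [T_zero]
  · exact (cheb_natDegree_le n).2

lemma cheb_eq_nodal (k : ℕ) :
    T ℝ (((k+1:ℕ)):ℤ) = C ((2:ℝ)^k) * Lagrange.nodal (range (k+1)) (chebNode (k+1)) := by
  classical
  set n := k + 1 with hn
  set q := Lagrange.nodal (range n) (chebNode n) with hq
  have hqd : q.natDegree = n := by simp [hq, Lagrange.natDegree_nodal]
  have hqm : q.Monic := Lagrange.nodal_monic
  have hd : (T ℝ n - C ((2:ℝ)^k) * q).degree < (#(range n) : ℕ) := by
    rw [card_range, degree_lt_iff_coeff_zero]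
    intro m hm
    rw [coeff_sub, coeff_C_mul]
    rcases eq_or_lt_of_le hm with h | h
    · rw [← h]
      have h1 : (T ℝ n).coeff n = 2^k := cheb_coeff k
      have h2 : q.coeff n = 1 := by
        have := hqm.coeff_natDegree
        rwa [hqd] at this
      rw [h1, h2, mul_one, sub_self]
    · rw [coeff_eq_zero_of_natDegree_lt (lt_of_le_of_lt (cheb_natDegree_le' n) h),
        coeff_eq_zero_of_natDegree_lt (by rw [hqd]; exact h), mul_zero, sub_zero]
  have := Polynomial.eq_zero_of_degree_lt_of_eval_index_eq_zero _ (chebNode_injOn n) hd ?_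
  · have h := sub_eq_zero.mp this
    exact_mod_cast h
  · intro i hi
    rw [eval_sub, eval_mul, eval_C, cheb_root (mem_range.mp hi),
      Lagrange.eval_nodal_at_node hi, mul_zero, sub_zero]

lemma cheb_prod (k : ℕ) {j : ℕ} (hj : j ∈ range (k+1)) :
    ∏ i ∈ (range (k+1)).erase j, |chebNode (k+1) j - chebNode (k+1) i|
      = (k+1) / (2^k * Real.sin ((2*(j:ℝ)+1)*π/(2*(k+1)))) := by
  classical
  have hjk := mem_range.mp hj
  set n := k + 1 with hn
  have hcast : ((n:ℕ):ℝ) = (k:ℝ)+1 := by push_cast [hn]; ring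
  set θ : ℝ := (2*(j:ℝ)+1)*π/(2*((k:ℝ)+1)) with hθ
  have hθeq : (2*(j:ℝ)+1)*π/(2*(n:ℝ)) = θ := by rw [hθ, hcast]
  have hθmem : θ ∈ Set.Ioo 0 π := hθeq ▸ chebAngle_mem (n := n) (j := j) hjk
  have hsin : 0 < Real.sin θ := Real.sin_pos_of_pos_of_lt_pi hθmem.1 hθmem.2
  have hx : chebNode n j = Real.cos θ := by rw [chebNode, hθeq]
  set P : ℝ := ∏ i ∈ (range n).erase j, (chebNode n j - chebNode n i) with hP
  have h1 : eval (chebNode n j) (derivative (T ℝ n)) = 2^k * P := by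
    rw [cheb_eq_nodal k, derivative_C_mul, eval_mul, eval_C,
      Lagrange.eval_nodal_derivative_eval_node_eq hj, Lagrange.eval_nodal]
  have h2 : eval (chebNode n j) (derivative (T ℝ n)) * Real.sin θ
      = ((k:ℝ)+1) * Real.sin (((k:ℝ)+1) * θ) := by
    rw [T_derivative_eq_U (n:ℤ), eval_mul, hx]
    have hU := Polynomial.Chebyshev.U_real_cos θ ((n:ℤ)-1)
    rw [mul_assoc, eval_intCast]
    rw [hU]
    push_cast
    norm_num
    rw [hcast]
  have h3 : |Real.sin (((k:ℝ)+1) * θ)| = 1 := by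
    have hθval : ((k:ℝ)+1) * θ = (j:ℝ)*π + π/2 := by
      have hnpos : (0:ℝ) < (k:ℝ)+1 := by positivity
      rw [hθ]; field_simp
    rw [hθval, Real.sin_add_pi_div_two]
    have : ((j:ℤ):ℝ) = (j:ℝ) := by norm_cast
    rw [← this]
    exact Real.abs_cos_int_mul_pi j
  have h4 : (2:ℝ)^k * |P| * Real.sin θ = n := by
    have := congrArg abs (h1 ▸ h2)
    rw [abs_mul, abs_mul, abs_mul, h3, mul_one,
      abs_of_pos hsin, abs_of_pos (by positivity : (0:ℝ) < (2:ℝ)^k),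
      abs_of_pos (by positivity : (0:ℝ) < (k:ℝ)+1)] at this
    push_cast
    linarith
  have habs : ∏ i ∈ (range n).erase j, |chebNode n j - chebNode n i| = |P| := by
    rw [hP, Finset.abs_prod]
  rw [habs]
  field_simp at h4 ⊢
  linarith
lemma cheb_sin_pos (k : ℕ) {j : ℕ} (hj : j < k+1) :
    0 < Real.sin ((2*(j:ℝ)+1)*π/(2*((k:ℝ)+1))) := by
  have h := chebAngle_mem (n := k+1) (j := j) hj
  have hc : ((k+1:ℕ):ℝ) = (k:ℝ)+1 := by push_cast; ring
  rw [hc] at h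
  exact Real.sin_pos_of_pos_of_lt_pi h.1 h.2

lemma chebNode_mem (k : ℕ) {j : ℕ} (hj : j < k+1) :
    chebNode (k+1) j ∈ Set.Ioo (-1:ℝ) 1 := by
  have h := chebAngle_mem (n := k+1) (j := j) hj
  constructor
  · have := Real.strictAntiOn_cos (Set.mem_Icc_of_Ioo h) (Set.right_mem_Icc.mpr Real.pi_pos.le) h.2
    simpa [Real.cos_pi, chebNode] using this
  · have := Real.strictAntiOn_cos (Set.left_mem_Icc.mpr Real.pi_pos.le) (Set.mem_Icc_of_Ioo h) h.1
    simpa [Real.cos_zero, chebNode] using this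

end ChebPart

section MeasPart
open MeasureTheory Set

variable {a b : ℝ} {ω : Set ℝ}

lemma omega_fin (hω : ω ⊆ Icc a b) : volume ω ≠ ⊤ :=
  ((measure_mono hω).trans_lt (by simp [Real.volume_Icc])).ne

lemma F_add (hω : ω ⊆ Icc a b) (hmeas : MeasurableSet ω) {s t : ℝ} (hst : s ≤ t) :
    (volume (ω ∩ Iic t)).toReal
      = (volume (ω ∩ Iic s)).toReal + (volume (ω ∩ Ioc s t)).toReal := by
  have hfin := omega_fin hω
  have hu : ω ∩ Iic t = (ω ∩ Iic s) ∪ (ω ∩ Ioc s t) := by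
    rw [← inter_union_distrib_left, Iic_union_Ioc_eq_Iic hst]
  have hd : Disjoint (ω ∩ Iic s) (ω ∩ Ioc s t) :=
    Disjoint.mono inter_subset_right inter_subset_right
      (by simp [Set.disjoint_left]; intro x hx hx'; linarith)
  rw [hu, measure_union hd (hmeas.inter measurableSet_Ioc), ENNReal.toReal_add
    (((measure_mono inter_subset_left).trans_lt hfin.lt_top).ne)
    (((measure_mono inter_subset_left).trans_lt hfin.lt_top).ne)]

lemma F_lip (hω : ω ⊆ Icc a b) (hmeas : MeasurableSet ω) (s t : ℝ) :
    |(volume (ω ∩ Iic t)).toReal - (volume (ω ∩ Iic s)).toReal| ≤ |t - s| := by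
  have key : ∀ s t : ℝ, s ≤ t → (volume (ω ∩ Iic t)).toReal - (volume (ω ∩ Iic s)).toReal
      ∈ Icc 0 (t - s) := by
    intro s t hst
    have h := F_add hω hmeas hst
    have h1 : (volume (ω ∩ Ioc s t)).toReal ≤ t - s := by
      have hsub : volume (ω ∩ Ioc s t) ≤ volume (Ioc s t) := measure_mono inter_subset_right
      have h2 : volume (Ioc s t) = ENNReal.ofReal (t - s) := by simp [Real.volume_Ioc]
      calc (volume (ω ∩ Ioc s t)).toReal ≤ (volume (Ioc s t)).toReal :=
            ENNReal.toReal_mono (by simp [h2]) hsub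
        _ = t - s := by rw [h2, ENNReal.toReal_ofReal (by linarith)]
    constructor
    · have := ENNReal.toReal_nonneg (a := volume (ω ∩ Ioc s t))
      rw [h]; linarith
    · rw [h]; linarith
  rcases le_total s t with h | h
  · have := key s t h
    rw [abs_of_nonneg this.1, abs_of_nonneg (by linarith : (0:ℝ) ≤ t - s)]
    exact this.2
  · have := key t s h
    rw [abs_sub_comm, abs_sub_comm t s, abs_of_nonneg this.1,
      abs_of_nonneg (by linarith : (0:ℝ) ≤ s - t)]
    exact this.2

lemma quantile (hω : ω ⊆ Icc a b) (hmeas : MeasurableSet ω) {c : ℝ}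
    (hc0 : 0 < c) (hcm : c ≤ (volume ω).toReal) :
    ∃ y, y ∈ closure ω ∧ y ∈ Icc a b ∧ (volume (ω ∩ Iic y)).toReal = c := by
  set F : ℝ → ℝ := fun t => (volume (ω ∩ Iic t)).toReal with hF
  have hlip : ∀ s t : ℝ, |F t - F s| ≤ |t - s| := fun s t => F_lip hω hmeas s t
  have hmono : Monotone F := by
    intro s t hst
    have h := F_add hω hmeas hst
    have h2 : (0:ℝ) ≤ (volume (ω ∩ Ioc s t)).toReal := ENNReal.toReal_nonneg
    show F s ≤ F t
    rw [hF]; simp only; rw [h]; linarith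
  have hFa : F a = 0 := by
    have hsub : ω ∩ Iic a ⊆ {a} := fun z hz => le_antisymm hz.2 (hω hz.1).1
    have h0 : volume (ω ∩ Iic a) = 0 :=
      le_antisymm (le_trans (measure_mono hsub) (by simp)) zero_le
    simp [hF, h0]
  have hFb : F b = (volume ω).toReal := by
    have : ω ∩ Iic b = ω := inter_eq_left.mpr (fun z hz => (hω hz).2)
    simp [hF, this]
  set S : Set ℝ := {t | c ≤ F t} with hS
  have hbS : b ∈ S := by simpa [hS, hFb] using hcm
  have hlb : ∀ t ∈ S, a ≤ t := by
    intro t ht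
    by_contra h
    push_neg at h
    have := hmono h.le
    rw [hFa] at this
    exact absurd (le_trans ht this) (not_le.mpr hc0)
  have hne : S.Nonempty := ⟨b, hbS⟩
  have hbdd : BddBelow S := ⟨a, hlb⟩
  set y := sInf S with hy
  have hyab : y ∈ Icc a b := ⟨le_csInf hne hlb, csInf_le hbdd hbS⟩
  have hlty : ∀ t, t < y → F t < c := by
    intro t ht
    by_contra h
    push_neg at h
    exact absurd (csInf_le hbdd h) (not_le.mpr ht)
  have hFyge : c ≤ F y := by
    refine le_of_forall_pos_le_add ?_
    intro ε hε
    obtain ⟨s, hsS, hs⟩ := (csInf_lt_iff hbdd hne).mp (by linarith : sInf S < y + ε)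
    have h1 : c ≤ F (y + ε) := le_trans hsS (hmono hs.le)
    have h2 : F (y + ε) - F y ≤ ε := by
      have := hlip y (y+ε)
      rw [show (y + ε - y) = ε by ring, abs_of_pos hε] at this
      calc F (y+ε) - F y ≤ |F (y+ε) - F y| := le_abs_self _
        _ ≤ ε := this
    linarith
  have hFyle : F y ≤ c := by
    refine le_of_forall_pos_le_add ?_
    intro ε hε
    have h1 : F (y - ε) < c := hlty _ (by linarith)
    have h2 : F y - F (y - ε) ≤ ε := by
      have := hlip (y - ε) y
      rw [show (y - (y - ε)) = ε by ring, abs_of_pos hε] at this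
      calc F y - F (y-ε) ≤ |F y - F (y-ε)| := le_abs_self _
        _ ≤ ε := this
    linarith
  have hFy : F y = c := le_antisymm hFyle hFyge
  refine ⟨y, ?_, hyab, hFy⟩
  rw [Metric.mem_closure_iff]
  intro ε hε
  have h1 : F (y - ε/2) < c := hlty _ (by linarith)
  have h2 : 0 < (volume (ω ∩ Ioc (y - ε/2) y)).toReal := by
    have := F_add hω hmeas (by linarith : y - ε/2 ≤ y)
    have hFyy : F y = F (y - ε/2) + (volume (ω ∩ Ioc (y - ε/2) y)).toReal := this
    linarith [hFy ▸ hFyy]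
  have h3 : (ω ∩ Ioc (y - ε/2) y).Nonempty := by
    rcases (ω ∩ Ioc (y - ε/2) y).eq_empty_or_nonempty with h | h
    · rw [h] at h2; simp at h2
    · exact h
  obtain ⟨z, hzω, hz⟩ := h3
  exact ⟨z, hzω, by rw [Real.dist_eq, abs_sub_comm, abs_of_nonpos (by linarith [hz.2])]; linarith [hz.1, hz.2]⟩
end MeasPart

open MeasureTheory Set

/-- One-dimensional Remez inequality (weak explicit form): for an interval
`I = [a,b]`, a measurable `ω ⊆ I` of positive measure and a real polynomial `p`
of degree at most `k`, `sup_I |p| ≤ (4|I|/|ω|)^k · sup_ω |p|`. -/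
theorem remez_one_dim (a b : ℝ) (hab : a < b) (ω : Set ℝ) (hω : ω ⊆ Icc a b)
    (hmeas : MeasurableSet ω) (hpos : 0 < volume ω)
    (k : ℕ) (p : Polynomial ℝ) (hp : p.natDegree ≤ k) :
    ∀ x ∈ Icc a b,
      |p.eval x| ≤ (4 * (b - a) / (volume ω).toReal) ^ k *
        sSup ((fun y => |p.eval y|) '' ω) := by
  intro x hx
  classical
  have hfin : volume ω ≠ ⊤ := omega_fin hω
  set m := (volume ω).toReal with hm
  have hm0 : 0 < m := ENNReal.toReal_pos hpos.ne' hfin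
  have hL0 : (0:ℝ) < b - a := by linarith
  set f : ℝ → ℝ := fun y => |p.eval y| with hf
  have hcont : Continuous f := continuous_abs.comp (Polynomial.continuous p)
  have hbdd : BddAbove (f '' ω) :=
    BddAbove.mono (Set.image_mono (f := f) hω) (isCompact_Icc.bddAbove_image hcont.continuousOn)
  set S := sSup (f '' ω) with hSdef
  have hωne : ω.Nonempty := nonempty_of_measure_ne_zero hpos.ne'
  have hS0 : 0 ≤ S := by
    obtain ⟨y0, hy0⟩ := hωne
    exact le_trans (abs_nonneg _) (le_csSup hbdd ⟨y0, hy0, rfl⟩)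
  have hclos : ∀ y ∈ closure ω, f y ≤ S := fun y hy =>
    closure_minimal (fun z hz => le_csSup hbdd ⟨z, hz, rfl⟩)
      (isClosed_le hcont continuous_const) hy
  set t : ℕ → ℝ := fun j => (1 - chebNode (k+1) j)/2 with ht
  have ht01 : ∀ j ∈ Finset.range (k+1), t j ∈ Set.Ioo (0:ℝ) 1 := by
    intro j hj
    have h := chebNode_mem k (Finset.mem_range.mp hj)
    constructor
    · have := h.2; simp only [ht]; linarith
    · have := h.1; simp only [ht]; linarith
  have hex : ∀ j ∈ Finset.range (k+1), ∃ y, y ∈ closure ω ∧ y ∈ Icc a b ∧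
      (volume (ω ∩ Iic y)).toReal = t j * m := by
    intro j hj
    have h := ht01 j hj
    exact quantile hω hmeas (mul_pos h.1 hm0)
      (by nlinarith [h.1, h.2, hm0])
  choose! Y hY1 hY2 hY3 using hex
  have hsep : ∀ i ∈ Finset.range (k+1), ∀ j ∈ Finset.range (k+1),
      m * |t j - t i| ≤ |Y j - Y i| := by
    intro i hi j hj
    have hlip := F_lip hω hmeas (Y i) (Y j)
    rw [hY3 j hj, hY3 i hi] at hlip
    calc m * |t j - t i| = |t j * m - t i * m| := by
          rw [show t j * m - t i * m = (t j - t i) * m by ring, abs_mul,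
            abs_of_pos hm0]; ring
      _ ≤ |Y j - Y i| := hlip
  have hcne : ∀ i ∈ Finset.range (k+1), ∀ j ∈ Finset.range (k+1), i ≠ j →
      chebNode (k+1) i ≠ chebNode (k+1) j := by
    intro i hi j hj hij h
    exact hij (chebNode_injOn (k+1) (Finset.mem_coe.mpr hi) (Finset.mem_coe.mpr hj) h)
  have htne : ∀ i ∈ Finset.range (k+1), ∀ j ∈ Finset.range (k+1), i ≠ j →
      0 < |t j - t i| := by
    intro i hi j hj hij
    rw [abs_pos, sub_ne_zero]
    intro h
    apply hcne i hi j hj hij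
    have : (1 - chebNode (k+1) j)/2 = (1 - chebNode (k+1) i)/2 := h
    linarith
  have hYinj : Set.InjOn Y (Finset.range (k+1)) := by
    intro i hi j hj hij
    by_contra hne
    have h1 := hsep i (Finset.mem_coe.mp hi) j (Finset.mem_coe.mp hj)
    rw [hij] at h1
    simp only [sub_self, abs_zero] at h1
    have h2 := htne i (Finset.mem_coe.mp hi) j (Finset.mem_coe.mp hj) (fun h => hne (h ▸ rfl))
    nlinarith
  have hdeg : p.degree < ((Finset.range (k+1)).card : ℕ) := by
    rw [Finset.card_range]
    exact lt_of_le_of_lt Polynomial.degree_le_natDegree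
      (by exact_mod_cast Nat.lt_succ_of_le hp)
  have hinterp := Lagrange.eq_interpolate hYinj hdeg
  have heval : |p.eval x| ≤ ∑ j ∈ Finset.range (k+1),
      |p.eval (Y j)| * |Polynomial.eval x (Lagrange.basis (Finset.range (k+1)) Y j)| := by
    conv_lhs => rw [hinterp]
    rw [Lagrange.interpolate_apply, Polynomial.eval_finset_sum]
    refine le_trans (Finset.abs_sum_le_sum_abs _ _) (le_of_eq ?_)
    refine Finset.sum_congr rfl fun j hj => ?_
    rw [Polynomial.eval_mul, Polynomial.eval_C, abs_mul]
  have hterm : ∀ j ∈ Finset.range (k+1),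
      |p.eval (Y j)| * |Polynomial.eval x (Lagrange.basis (Finset.range (k+1)) Y j)|
        ≤ S * ((4*(b-a)/m)^k / ((k:ℝ)+1)) := by
    intro j hj
    have hjk := Finset.mem_range.mp hj
    have hpj : |p.eval (Y j)| ≤ S := hclos _ (hY1 j hj)
    have hbasis : |Polynomial.eval x (Lagrange.basis (Finset.range (k+1)) Y j)|
        ≤ (4*(b-a)/m)^k / ((k:ℝ)+1) := by
      rw [Lagrange.basis, Polynomial.eval_prod, Finset.abs_prod]
      have hcard : ((Finset.range (k+1)).erase j).card = k := by
        rw [Finset.card_erase_of_mem hj, Finset.card_range]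
        omega
      have hstep : ∀ i ∈ (Finset.range (k+1)).erase j,
          |Polynomial.eval x (Lagrange.basisDivisor (Y j) (Y i))|
            ≤ (2*(b-a)/m) * |chebNode (k+1) j - chebNode (k+1) i|⁻¹ := by
        intro i hi
        have hii := Finset.mem_of_mem_erase hi
        have hij : i ≠ j := Finset.ne_of_mem_erase hi
        have htpos := htne i hii j hj hij
        have hYsep := hsep i hii j hj
        have htd : |t j - t i| = |chebNode (k+1) j - chebNode (k+1) i| / 2 := by
          rw [ht]
          simp only
          rw [show (1 - chebNode (k+1) j)/2 - (1 - chebNode (k+1) i)/2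
              = -((chebNode (k+1) j - chebNode (k+1) i)/2) by ring, abs_neg, abs_div, abs_two]
        have hmt : 0 < m * |t j - t i| := mul_pos hm0 htpos
        have hYpos : 0 < |Y j - Y i| := lt_of_lt_of_le hmt hYsep
        have hev : Polynomial.eval x (Lagrange.basisDivisor (Y j) (Y i))
            = (Y j - Y i)⁻¹ * (x - Y i) := by
          simp [Lagrange.basisDivisor]
        rw [hev, abs_mul, abs_inv]
        have hxY : |x - Y i| ≤ b - a := by
          have h2 := hY2 i hii
          rw [abs_sub_le_iff]
          constructor
          · linarith [hx.2, h2.1]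
          · linarith [hx.1, h2.2]
        have habsc : 0 < |chebNode (k+1) j - chebNode (k+1) i| := by
          rw [abs_pos, sub_ne_zero]
          exact hcne j hj i hii (Ne.symm hij)
        calc |Y j - Y i|⁻¹ * |x - Y i| ≤ (m * |t j - t i|)⁻¹ * (b - a) := by
              apply mul_le_mul _ hxY (abs_nonneg _) (by positivity)
              exact inv_anti₀ hmt hYsep
          _ = (2*(b-a)/m) * |chebNode (k+1) j - chebNode (k+1) i|⁻¹ := by
              rw [htd]
              field_simp
      calc (∏ i ∈ (Finset.range (k+1)).erase j,
            |Polynomial.eval x (Lagrange.basisDivisor (Y j) (Y i))|)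
          ≤ ∏ i ∈ (Finset.range (k+1)).erase j,
            ((2*(b-a)/m) * |chebNode (k+1) j - chebNode (k+1) i|⁻¹) :=
            Finset.prod_le_prod (fun i _ => abs_nonneg _) hstep
        _ = (2*(b-a)/m)^k * (∏ i ∈ (Finset.range (k+1)).erase j,
            |chebNode (k+1) j - chebNode (k+1) i|)⁻¹ := by
            rw [Finset.prod_mul_distrib, Finset.prod_const, hcard, ← Finset.prod_inv_distrib]
        _ = (2*(b-a)/m)^k *
            (2^k * Real.sin ((2*(j:ℝ)+1)*Real.pi/(2*((k:ℝ)+1))) / ((k:ℝ)+1)) := by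
            rw [cheb_prod k hj, inv_div]
        _ ≤ (4*(b-a)/m)^k / ((k:ℝ)+1) := by
            have hs1 := Real.sin_le_one ((2*(j:ℝ)+1)*Real.pi/(2*((k:ℝ)+1)))
            have hs0 := cheb_sin_pos k hjk
            have e1 : (2*(b-a)/m)^k * (2:ℝ)^k = (4*(b-a)/m)^k := by
              rw [← mul_pow]
              congr 1
              field_simp
              ring
            calc (2*(b-a)/m)^k *
                (2^k * Real.sin ((2*(j:ℝ)+1)*Real.pi/(2*((k:ℝ)+1))) / ((k:ℝ)+1))
                ≤ (2*(b-a)/m)^k * ((2:ℝ)^k * 1 / ((k:ℝ)+1)) := by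
                  apply mul_le_mul_of_nonneg_left _ (by positivity : (0:ℝ) ≤ (2*(b-a)/m)^k)
                  apply (div_le_div_iff_of_pos_right (by positivity : (0:ℝ) < (k:ℝ)+1)).mpr
                  exact mul_le_mul_of_nonneg_left hs1 (by positivity)
              _ = (4*(b-a)/m)^k / ((k:ℝ)+1) := by
                  rw [mul_one, ← mul_div_assoc, e1]
    exact mul_le_mul hpj hbasis (abs_nonneg _) hS0
  calc |p.eval x| ≤ ∑ j ∈ Finset.range (k+1),
      |p.eval (Y j)| * |Polynomial.eval x (Lagrange.basis (Finset.range (k+1)) Y j)| := heval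
    _ ≤ ∑ _j ∈ Finset.range (k+1), S * ((4*(b-a)/m)^k / ((k:ℝ)+1)) :=
        Finset.sum_le_sum hterm
    _ = (4*(b-a)/m)^k * S := by
        rw [Finset.sum_const, Finset.card_range, nsmul_eq_mul]
        push_cast
        field_simp
end

section
/- Let B be a convex body (e.g. a ball) in ℝⁿ, ω ⊂ B a measurable subset of positive measure, and x ∈ B. Then there exists a ray l with origin x such that mes₁(B ∩ l) / mes₁(ω ∩ l) ≤ n·|B|/|ω|, where mes₁ is one-dimensional Lebesgue measure along the ray and |·| is n-dimensional Lebesgue measure. -/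
open MeasureTheory Metric Set intervalIntegral
open scoped ENNReal

variable {n : ℕ}

local notation "E" n => EuclideanSpace ℝ (Fin n)

lemma lintegral_pow_Ioc (m : ℕ) {R : ℝ} (hR : 0 ≤ R) :
    ∫⁻ s in Ioc (0:ℝ) R, ENNReal.ofReal (s ^ m) =
      ENNReal.ofReal (R ^ (m + 1) / ((m + 1 : ℕ) : ℝ)) := by
  rw [← ofReal_integral_eq_lintegral_ofReal ((intervalIntegrable_pow m).1)
      (by filter_upwards [ae_restrict_mem measurableSet_Ioc] with y hy
          exact pow_nonneg hy.1.le _)]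
  rw [← intervalIntegral.integral_of_le hR, integral_pow]
  norm_num

lemma ray_Icc {B : Set (E n)} (hBconv : Convex ℝ B) (hBcpt : IsCompact B)
    {x : E n} (hx : x ∈ B) {v : E n} (hv : ‖v‖ = 1) :
    ∃ R : ℝ, 0 ≤ R ∧ {s : ℝ | 0 ≤ s ∧ x + s • v ∈ B} = Icc 0 R := by
  set I := {s : ℝ | 0 ≤ s ∧ x + s • v ∈ B} with hIdef
  have h0I : (0:ℝ) ∈ I := ⟨le_refl 0, by simpa using hx⟩
  have hconv : Convex ℝ I := by
    intro p hp q hq a b ha hb hab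
    refine ⟨add_nonneg (mul_nonneg ha hp.1) (mul_nonneg hb hq.1), ?_⟩
    have e : a • (x + p • v) + b • (x + q • v) = (a + b) • x + (a • p + b • q) • v := by
      simp only [smul_eq_mul]
      module
    rw [hab, one_smul] at e
    rw [← e]
    exact hBconv hp.2 hq.2 ha hb hab
  have hclosed : IsClosed I := by
    have : I = Ici 0 ∩ (fun s : ℝ => x + s • v) ⁻¹' B := by ext s; simp [hIdef, and_comm]
    rw [this]
    exact isClosed_Ici.inter (hBcpt.isClosed.preimage (by fun_prop))
  have hbdd : Bornology.IsBounded I := by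
    obtain ⟨D, hD⟩ := hBcpt.isBounded.subset_closedBall x
    refine (isBounded_Icc (-D) D).subset fun s hs => ?_
    have := hD hs.2
    rw [mem_closedBall, dist_eq_norm] at this
    have hs' : ‖s • v‖ ≤ D := by simpa using this
    rw [norm_smul, hv, mul_one, Real.norm_eq_abs] at hs'
    exact abs_le.1 hs'
  have hcpt : IsCompact I := isCompact_iff_isClosed_bounded.2 ⟨hclosed, hbdd⟩
  have hIcc := eq_Icc_of_connected_compact ⟨⟨0, h0I⟩, hconv.isPreconnected⟩ hcpt
  have hInf : sInf I = 0 :=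
    le_antisymm (csInf_le hbdd.bddBelow h0I) (le_csInf ⟨0, h0I⟩ fun b hb => hb.1)
  rw [hInf] at hIcc
  exact ⟨sSup I, le_csSup hbdd.bddAbove h0I, hIcc⟩

lemma ray_facts (hn : 0 < n) {B ω : Set (E n)} (hBconv : Convex ℝ B) (hBcpt : IsCompact B)
    (hω : ω ⊆ B) {x : E n} (hx : x ∈ B) {v : E n} (hv : ‖v‖ = 1) :
    (n : ℝ≥0∞) * ∫⁻ s in {s : ℝ | 0 < s ∧ x + s • v ∈ B}, ENNReal.ofReal (s ^ (n - 1)) =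
        (volume {s : ℝ | 0 ≤ s ∧ x + s • v ∈ B}) ^ n ∧
      (∫⁻ s in {s : ℝ | 0 < s ∧ x + s • v ∈ ω}, ENNReal.ofReal (s ^ (n - 1))) ≤
        (volume {s : ℝ | 0 ≤ s ∧ x + s • v ∈ B}) ^ (n - 1) *
          volume {s : ℝ | 0 ≤ s ∧ x + s • v ∈ ω} ∧
      volume {s : ℝ | 0 ≤ s ∧ x + s • v ∈ B} ≠ ⊤ := by
  obtain ⟨R, hR0, hIcc⟩ := ray_Icc hBconv hBcpt hx hv
  have hG : volume {s : ℝ | 0 ≤ s ∧ x + s • v ∈ B} = ENNReal.ofReal R := by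
    rw [hIcc, Real.volume_Icc, sub_zero]
  have hIoc : {s : ℝ | 0 < s ∧ x + s • v ∈ B} = Ioc 0 R := by
    ext s
    constructor
    · rintro ⟨hs, hsB⟩
      have : s ∈ Icc 0 R := by rw [← hIcc]; exact ⟨hs.le, hsB⟩
      exact ⟨hs, this.2⟩
    · rintro ⟨hs1, hs2⟩
      have : s ∈ {s : ℝ | 0 ≤ s ∧ x + s • v ∈ B} := by rw [hIcc]; exact ⟨hs1.le, hs2⟩
      exact ⟨hs1, this.2⟩
  refine ⟨?_, ?_, by rw [hG]; exact ENNReal.ofReal_ne_top⟩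
  · rw [hIoc, lintegral_pow_Ioc (n - 1) hR0, hG, Nat.sub_add_cancel hn,
      ← ENNReal.ofReal_pow hR0, ← ENNReal.ofReal_natCast n,
      ← ENNReal.ofReal_mul (by positivity)]
    congr 1
    field_simp
  · have hsub : {s : ℝ | 0 < s ∧ x + s • v ∈ ω} ⊆ Ioc 0 R := by
      intro s hs
      rw [← hIoc]
      exact ⟨hs.1, hω hs.2⟩
    calc ∫⁻ s in {s : ℝ | 0 < s ∧ x + s • v ∈ ω}, ENNReal.ofReal (s ^ (n - 1))
        ≤ ∫⁻ _ in {s : ℝ | 0 < s ∧ x + s • v ∈ ω}, ENNReal.ofReal (R ^ (n - 1)) := by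
          refine setLIntegral_mono measurable_const fun s hs => ?_
          exact ENNReal.ofReal_le_ofReal
            (pow_le_pow_left₀ (hsub hs).1.le (hsub hs).2 _)
      _ = ENNReal.ofReal (R ^ (n - 1)) * volume {s : ℝ | 0 < s ∧ x + s • v ∈ ω} :=
          setLIntegral_const _ _
      _ ≤ ENNReal.ofReal (R ^ (n - 1)) * volume {s : ℝ | 0 ≤ s ∧ x + s • v ∈ ω} :=
          mul_le_mul_right (measure_mono (fun s hs => ⟨le_of_lt hs.1, hs.2⟩ :
            {s : ℝ | 0 < s ∧ x + s • v ∈ ω} ⊆ {s : ℝ | 0 ≤ s ∧ x + s • v ∈ ω})) _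
      _ = (volume {s : ℝ | 0 ≤ s ∧ x + s • v ∈ B}) ^ (n - 1) *
            volume {s : ℝ | 0 ≤ s ∧ x + s • v ∈ ω} := by
          rw [hG, ← ENNReal.ofReal_pow hR0]

lemma polar_measure (hn : 0 < n) (x : E n) {A : Set (E n)} (hA : MeasurableSet A) :
    volume A = ∫⁻ v : sphere (0 : E n) 1,
      (∫⁻ s in {s : ℝ | 0 < s ∧ x + s • (v : E n) ∈ A}, ENNReal.ofReal (s ^ (n - 1)) ∂volume)
      ∂(volume : Measure (E n)).toSphere := by
  haveI : Nontrivial (E n) := by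
    have : Nonempty (Fin n) := ⟨⟨0, hn⟩⟩
    infer_instance
  set A' : Set (E n) := (fun y => x + y) ⁻¹' A with hA'def
  have hA' : MeasurableSet A' := hA.preimage (measurable_const.add measurable_id)
  have h1 : volume A = volume A' := (measure_preimage_add volume x A).symm
  have h2 : volume A' = (volume : Measure (E n)).comap Subtype.val
      ((Subtype.val : ({0}ᶜ : Set (E n)) → E n) ⁻¹' A') := by
    rw [comap_subtype_coe_apply (measurableSet_singleton (0 : E n)).compl,
      Subtype.image_preimage_coe, inter_comm, ← diff_eq,
      measure_diff_null (measure_singleton _)]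
  set S : Set (sphere (0 : E n) 1 × Ioi (0:ℝ)) :=
    (homeomorphUnitSphereProd (E n)).symm ⁻¹' (Subtype.val ⁻¹' A') with hSdef
  have hSmeas : MeasurableSet S :=
    (hA'.preimage measurable_subtype_coe).preimage (homeomorphUnitSphereProd (E n)).symm.measurable
  have h3 : (volume : Measure (E n)).comap Subtype.val
      ((Subtype.val : ({0}ᶜ : Set (E n)) → E n) ⁻¹' A')
      = ((volume : Measure (E n)).toSphere.prod
          (Measure.volumeIoiPow (Module.finrank ℝ (E n) - 1))) S := by
    rw [← (Measure.measurePreserving_homeomorphUnitSphereProd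
        (volume : Measure (E n))).measure_preimage hSmeas.nullMeasurableSet]
    congr 1
    ext y
    simp [hSdef]
  rw [h1, h2, h3, Measure.prod_apply hSmeas]
  have hdim : Module.finrank ℝ (E n) - 1 = n - 1 := by rw [finrank_euclideanSpace_fin]
  rw [hdim]
  congr 1
  ext v
  have hslice : Prod.mk v ⁻¹' S
      = (Subtype.val : Ioi (0:ℝ) → ℝ) ⁻¹' {s : ℝ | x + s • (v : E n) ∈ A} := by
    ext r
    simp [hSdef, hA'def]
  have hTmeas : MeasurableSet {s : ℝ | x + s • (v : E n) ∈ A} :=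
    (by fun_prop : Measurable fun s : ℝ => x + s • (v : E n)) hA
  rw [hslice, Measure.volumeIoiPow, withDensity_apply _ (measurable_subtype_coe hTmeas),
    setLIntegral_subtype measurableSet_Ioi _ (fun a : ℝ => ENNReal.ofReal (a ^ (n - 1))),
    Subtype.image_preimage_coe]
  congr 1

/-- Lemma 3 of Brudnyi–Ganzburg: for a convex body `B ⊂ ℝⁿ`, a measurable
`ω ⊆ B` of positive measure and a point `x ∈ B`, there is a ray `l` from `x`
(with unit direction `v`) such that
`mes₁(B ∩ l) / mes₁(ω ∩ l) ≤ n |B| / |ω|` (in cross-multiplied form). -/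
theorem exists_good_ray (n : ℕ) (hn : 0 < n) (B ω : Set (EuclideanSpace ℝ (Fin n)))
    (hBconv : Convex ℝ B) (hBcpt : IsCompact B) (hBint : (interior B).Nonempty)
    (hω : ω ⊆ B) (hmeas : MeasurableSet ω) (hpos : 0 < volume ω)
    (x : EuclideanSpace ℝ (Fin n)) (hx : x ∈ B) :
    ∃ v : EuclideanSpace ℝ (Fin n), ‖v‖ = 1 ∧
      (volume {s : ℝ | 0 ≤ s ∧ x + s • v ∈ B}).toReal * (volume ω).toReal ≤
        n * (volume B).toReal * (volume {s : ℝ | 0 ≤ s ∧ x + s • v ∈ ω}).toReal := by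
  by_cases hzero : ∃ v : EuclideanSpace ℝ (Fin n), ‖v‖ = 1 ∧
      volume {s : ℝ | 0 ≤ s ∧ x + s • v ∈ B} = 0
  · obtain ⟨v, hv, h0⟩ := hzero
    refine ⟨v, hv, ?_⟩
    rw [h0]
    simp only [ENNReal.toReal_zero, zero_mul]
    positivity
  · push_neg at hzero
    by_contra hcon
    push_neg at hcon
    haveI : Nontrivial (EuclideanSpace ℝ (Fin n)) := by
      have : Nonempty (Fin n) := ⟨⟨0, hn⟩⟩
      infer_instance
    set σ := (volume : Measure (EuclideanSpace ℝ (Fin n))).toSphere with hσdef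
    set G : sphere (0 : EuclideanSpace ℝ (Fin n)) 1 → ℝ≥0∞ :=
      fun v => volume {s : ℝ | 0 ≤ s ∧ x + s • (v : EuclideanSpace ℝ (Fin n)) ∈ B} with hGdef
    set F : sphere (0 : EuclideanSpace ℝ (Fin n)) 1 → ℝ≥0∞ :=
      fun v => volume {s : ℝ | 0 ≤ s ∧ x + s • (v : EuclideanSpace ℝ (Fin n)) ∈ ω} with hFdef
    have hvnorm : ∀ v : sphere (0 : EuclideanSpace ℝ (Fin n)) 1,
        ‖(v : EuclideanSpace ℝ (Fin n))‖ = 1 := fun v => norm_eq_of_mem_sphere v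
    have facts := fun v : sphere (0 : EuclideanSpace ℝ (Fin n)) 1 =>
      ray_facts hn hBconv hBcpt hω hx (hvnorm v)
    -- measurability of G and F
    have hGmeas : Measurable G := by
      have hset : MeasurableSet {p : (sphere (0 : EuclideanSpace ℝ (Fin n)) 1) × ℝ |
          0 ≤ p.2 ∧ x + p.2 • (p.1 : EuclideanSpace ℝ (Fin n)) ∈ B} := by
        refine (measurableSet_le measurable_const measurable_snd).inter ?_
        exact (by fun_prop :
          Measurable fun p : (sphere (0 : EuclideanSpace ℝ (Fin n)) 1) × ℝ =>
            x + p.2 • (p.1 : EuclideanSpace ℝ (Fin n))) hBcpt.measurableSet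
      exact measurable_measure_prodMk_left hset
    have hFmeas : Measurable F := by
      have hset : MeasurableSet {p : (sphere (0 : EuclideanSpace ℝ (Fin n)) 1) × ℝ |
          0 ≤ p.2 ∧ x + p.2 • (p.1 : EuclideanSpace ℝ (Fin n)) ∈ ω} := by
        refine (measurableSet_le measurable_const measurable_snd).inter ?_
        exact (by fun_prop :
          Measurable fun p : (sphere (0 : EuclideanSpace ℝ (Fin n)) 1) × ℝ =>
            x + p.2 • (p.1 : EuclideanSpace ℝ (Fin n))) hmeas
      exact measurable_measure_prodMk_left hset
    -- basic finiteness / positivity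
    have hBfin : volume B ≠ ⊤ := hBcpt.measure_lt_top.ne
    have hωfin : volume ω ≠ ⊤ := ((measure_mono hω).trans_lt hBcpt.measure_lt_top).ne
    have hωpos : volume ω ≠ 0 := hpos.ne'
    have hGfin : ∀ v, G v ≠ ⊤ := fun v => (facts v).2.2
    have hG0 : ∀ v, G v ≠ 0 := fun v => hzero _ (hvnorm v)
    have hFfin : ∀ v, F v ≠ ⊤ := by
      intro v
      have hsub : {s : ℝ | 0 ≤ s ∧ x + s • (v : EuclideanSpace ℝ (Fin n)) ∈ ω}
          ⊆ {s : ℝ | 0 ≤ s ∧ x + s • (v : EuclideanSpace ℝ (Fin n)) ∈ B} :=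
        fun s hs => ⟨hs.1, hω hs.2⟩
      exact ((measure_mono hsub).trans_lt (lt_top_iff_ne_top.2 (hGfin v))).ne
    have hnB : (n : ℝ≥0∞) * volume B ≠ ⊤ := ENNReal.mul_ne_top (ENNReal.natCast_ne_top n) hBfin
    -- polar identities
    have hpolarB := polar_measure hn x hBcpt.measurableSet
    have hpolarω := polar_measure hn x hmeas
    have h1 : (n : ℝ≥0∞) * volume B = ∫⁻ v, G v ^ n ∂σ := by
      rw [hpolarB, ← lintegral_const_mul' _ _ (ENNReal.natCast_ne_top n)]
      exact lintegral_congr fun v => (facts v).1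
    have h2 : volume ω ≤ ∫⁻ v, G v ^ (n - 1) * F v ∂σ := by
      rw [hpolarω]
      exact lintegral_mono fun v => (facts v).2.1
    -- sigma is nonzero
    have hσne : σ ≠ 0 := by
      intro h0
      have huniv : σ univ = 0 := by rw [h0]; simp
      rw [hσdef, Measure.toSphere_apply_univ, finrank_euclideanSpace_fin] at huniv
      exact (mul_ne_zero (by exact_mod_cast hn.ne') (measure_ball_pos _ _ one_pos).ne') huniv
    -- strict pointwise inequality from negated goal
    have hstrict : ∀ v, (n : ℝ≥0∞) * volume B * F v < G v * volume ω := by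
      intro v
      have h := hcon _ (hvnorm v)
      refine (ENNReal.toReal_lt_toReal
        (ENNReal.mul_ne_top hnB (hFfin v)) (ENNReal.mul_ne_top (hGfin v) hωfin)).1 ?_
      rw [ENNReal.toReal_mul, ENNReal.toReal_mul, ENNReal.toReal_mul, ENNReal.toReal_natCast]
      exact h
    have hpt : ∀ v, G v ^ (n - 1) * ((n : ℝ≥0∞) * volume B * F v)
        < G v ^ (n - 1) * (G v * volume ω) := fun v =>
      (ENNReal.mul_lt_mul_iff_right (pow_ne_zero _ (hG0 v)) (ENNReal.pow_ne_top (hGfin v))).2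
        (hstrict v)
    have hgeq : ∀ v, G v ^ (n - 1) * (G v * volume ω) = G v ^ n * volume ω := by
      intro v
      rw [← mul_assoc, ← pow_succ, Nat.sub_add_cancel hn]
    have hgint : ∫⁻ v, G v ^ (n - 1) * (G v * volume ω) ∂σ
        = (n : ℝ≥0∞) * volume B * volume ω := by
      rw [lintegral_congr hgeq, lintegral_mul_const' _ _ hωfin, ← h1]
    have hfi : ∫⁻ v, G v ^ (n - 1) * ((n : ℝ≥0∞) * volume B * F v) ∂σ ≠ ⊤ := by
      refine ne_top_of_le_ne_top ?_ (lintegral_mono fun v => (hpt v).le)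
      rw [hgint]
      exact ENNReal.mul_ne_top hnB hωfin
    have hmain : (n : ℝ≥0∞) * volume B * volume ω < (n : ℝ≥0∞) * volume B * volume ω := by
      calc (n : ℝ≥0∞) * volume B * volume ω
          ≤ (n : ℝ≥0∞) * volume B * ∫⁻ v, G v ^ (n - 1) * F v ∂σ := mul_le_mul_right h2 _
        _ = ∫⁻ v, (n : ℝ≥0∞) * volume B * (G v ^ (n - 1) * F v) ∂σ :=
            (lintegral_const_mul' _ _ hnB).symm
        _ = ∫⁻ v, G v ^ (n - 1) * ((n : ℝ≥0∞) * volume B * F v) ∂σ :=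
            lintegral_congr fun v => by ring
        _ < ∫⁻ v, G v ^ (n - 1) * (G v * volume ω) ∂σ := by
            refine lintegral_strict_mono hσne ?_ hfi (Filter.Eventually.of_forall hpt)
            exact ((hGmeas.pow_const _).mul (hGmeas.mul measurable_const)).aemeasurable
        _ = (n : ℝ≥0∞) * volume B * volume ω := hgint
    exact lt_irrefl _ hmain
end
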